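/- Suppose for each pair $0 \leq s \leq t$ there is a family of compactly supported Borel probability kernels $k_{s,t}(x; du)$ on $\mathbb{R}$ and analytic maps $H_{s,t}: \mathbb{C}^+ \to \mathbb{C}^+$ with $H_{r,t}$ mapping into the domain of $H_{s,r}$ and $H_{s,t} = H_{s,r} \circ H_{r,t}$ for $s \leq r \leq t$, such that $\int_{\mathbb{R}} \frac{k_{s,t}(x; du)}{z - u} = \frac{1}{H_{s,t}(z) - x}$ for all $z \in \mathbb{C}^+$, $x \in \mathbb{R}$. Then the kernels satisfy the Chapman–Kolmogorov equation: $k_{s,t}(x; dv) = \int_{\mathbb{R}} k_{s,r}(x; du)\, k_{r,t}(u; dv)$ for all $0 \leq s \leq r \leq t$. -/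

import Mathlib

/-!
Both `k_{s,t}(x)` and `∫ k_{s,r}(x; du) k_{r,t}(u; ·)` have Cauchy transform `1/(H_{s,t}(z) - x)`:
for the second, integrate the identity for `k_{r,t}` against `k_{s,r}(x)` and apply the identity
for `k_{s,r}` at the point `H_{r,t}(z)`, which lies in the upper half plane.
A finite measure on `ℝ` is determined by its Cauchy transform `G`: for `γ > 0`, `-π⁻¹ Im G(a + iγ)`
is the integral of the Cauchy density of scale `γ` centred at `a`, so `G` determines the
integrals of every bounded continuous `f` smoothed by that density, and these tend to `∫ f` as
`γ → 0` by dominated convergence.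
-/

open MeasureTheory ProbabilityTheory Complex Filter Real
open scoped Topology NNReal BoundedContinuousFunction

section Resolvent

variable {z : ℂ}

lemma continuous_inv_sub_ofReal (hz : 0 < z.im) : Continuous fun u : ℝ => (z - u)⁻¹ :=
  (continuous_const.sub continuous_ofReal).inv₀ fun u h => by
    simpa [sub_eq_zero.mp h] using hz.ne'

lemma norm_inv_sub_ofReal_le (hz : 0 < z.im) (u : ℝ) : ‖(z - u)⁻¹‖ ≤ z.im⁻¹ := by
  rw [norm_inv]
  refine inv_anti₀ hz ?_
  exact (le_abs_self _).trans (by simpa using abs_im_le_norm (z - u))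

lemma integrable_inv_sub_ofReal (μ : Measure ℝ) [IsFiniteMeasure μ] (hz : 0 < z.im) :
    Integrable (fun u : ℝ => (z - u)⁻¹) μ :=
  (integrable_const z.im⁻¹).mono' (continuous_inv_sub_ofReal hz).aestronglyMeasurable
    (ae_of_all _ (norm_inv_sub_ofReal_le hz))

end Resolvent

section CauchyKernel

lemma cauchyPDFReal_eq_im_inv_sub (u : ℝ) (γ : ℝ≥0) (a : ℝ) :
    cauchyPDFReal u γ a = -π⁻¹ * ((a + γ * I - u : ℂ)⁻¹).im := by
  have hre : (a + γ * I - u : ℂ).re = a - u := by simp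
  have him : (a + γ * I - u : ℂ).im = γ := by simp
  rw [cauchyPDFReal_def, inv_im, normSq_apply, hre, him]
  ring

lemma cauchyPDFReal_nonneg (u : ℝ) (γ : ℝ≥0) (a : ℝ) : 0 ≤ cauchyPDFReal u γ a := by
  rw [cauchyPDFReal_def]; positivity

lemma cauchyPDFReal_add_mul (u : ℝ) {γ : ℝ≥0} (hγ : γ ≠ 0) (s : ℝ) :
    cauchyPDFReal u γ (u + γ * s) = (γ : ℝ)⁻¹ * cauchyPDFReal 0 1 s := by
  have : (γ : ℝ) ≠ 0 := by exact_mod_cast hγ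
  simp only [cauchyPDFReal_def, NNReal.coe_one]
  field_simp
  ring

lemma norm_mul_cauchyPDFReal_le (f : ℝ →ᵇ ℝ) (b u : ℝ) (γ : ℝ≥0) (a : ℝ) :
    ‖f b * cauchyPDFReal u γ a‖ ≤ ‖f‖ * cauchyPDFReal u γ a := by
  rw [norm_mul, Real.norm_of_nonneg (cauchyPDFReal_nonneg u γ a)]
  exact mul_le_mul_of_nonneg_right (f.norm_coe_le_norm b) (cauchyPDFReal_nonneg u γ a)

lemma integrable_mul_cauchyPDFReal (f : ℝ →ᵇ ℝ) (u : ℝ) (γ : ℝ≥0) :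
    Integrable fun a => f a * cauchyPDFReal u γ a :=
  ((integrable_cauchyPDFReal u).const_mul ‖f‖).mono'
    (f.continuous.aestronglyMeasurable.mul
      (stronglyMeasurable_cauchyPDFReal u γ).aestronglyMeasurable)
    (ae_of_all _ fun a => norm_mul_cauchyPDFReal_le f a u γ a)

lemma integral_norm_mul_cauchyPDFReal_le (f : ℝ →ᵇ ℝ) (u : ℝ) {γ : ℝ≥0} (hγ : γ ≠ 0) :
    ∫ a, ‖f a * cauchyPDFReal u γ a‖ ≤ ‖f‖ :=
  calc ∫ a, ‖f a * cauchyPDFReal u γ a‖ ≤ ∫ a, ‖f‖ * cauchyPDFReal u γ a :=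
        integral_mono (integrable_mul_cauchyPDFReal f u γ).norm
          ((integrable_cauchyPDFReal u).const_mul ‖f‖)
          fun a => norm_mul_cauchyPDFReal_le f a u γ a
    _ = ‖f‖ := by rw [integral_const_mul, integral_cauchyPDFReal_eq_one u hγ, mul_one]

lemma continuous_mul_cauchyPDFReal_uncurry (f : ℝ →ᵇ ℝ) {γ : ℝ≥0} (hγ : γ ≠ 0) :
    Continuous fun p : ℝ × ℝ => f p.2 * cauchyPDFReal p.1 γ p.2 := by
  have hγ : (0 : ℝ) < γ := NNReal.coe_pos.mpr (pos_iff_ne_zero.mpr hγ)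
  simp_rw [cauchyPDFReal_def]
  exact (f.continuous.comp continuous_snd).mul
    (continuous_const.mul (Continuous.inv₀ (by fun_prop) fun p => by positivity))

lemma integral_mul_cauchyPDFReal_eq (f : ℝ → ℝ) (u : ℝ) {γ : ℝ≥0} (hγ : γ ≠ 0) :
    ∫ a, f a * cauchyPDFReal u γ a = ∫ s, f (u + γ * s) * cauchyPDFReal 0 1 s := by
  have hγ' : (γ : ℝ) ≠ 0 := by exact_mod_cast hγ
  set g := fun a => f a * cauchyPDFReal u γ a
  calc ∫ a, g a = ∫ x, g (u + x) := (integral_add_left_eq_self g u).symm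
    _ = γ * ∫ s, g (u + γ * s) := by
        rw [Measure.integral_comp_mul_left (fun x => g (u + x)), abs_inv, NNReal.abs_eq,
          smul_eq_mul, mul_inv_cancel_left₀ hγ']
    _ = ∫ s, f (u + γ * s) * cauchyPDFReal 0 1 s := by
        rw [← integral_const_mul]
        congr 1 with s
        simp only [g, cauchyPDFReal_add_mul u hγ]
        field_simp

lemma tendsto_integral_mul_cauchyPDFReal (f : ℝ →ᵇ ℝ) (u : ℝ) :
    Tendsto (fun γ : ℝ≥0 => ∫ a, f a * cauchyPDFReal u γ a) (𝓝[>] 0) (𝓝 (f u)) := by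
  have hrescale : ∀ᶠ γ : ℝ≥0 in 𝓝[>] 0,
      ∫ s, f (u + γ * s) * cauchyPDFReal 0 1 s = ∫ a, f a * cauchyPDFReal u γ a :=
    eventually_mem_nhdsWithin.mono fun γ hγ =>
      (integral_mul_cauchyPDFReal_eq f u (ne_of_gt hγ)).symm
  have hlim : ∫ s, f u * cauchyPDFReal 0 1 s = f u := by
    rw [integral_const_mul, integral_cauchyPDFReal_eq_one 0 one_ne_zero, mul_one]
  refine hlim ▸ Tendsto.congr' hrescale
    (tendsto_integral_filter_of_dominated_convergence (fun s => ‖f‖ * cauchyPDFReal 0 1 s)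
      (Eventually.of_forall fun γ => ?_) (Eventually.of_forall fun γ => ae_of_all _ fun s => ?_)
      ((integrable_cauchyPDFReal 0).const_mul _) (ae_of_all _ fun s => ?_))
  · exact ((f.continuous.comp (by fun_prop)).aestronglyMeasurable).mul
      (stronglyMeasurable_cauchyPDFReal 0 1).aestronglyMeasurable
  · exact norm_mul_cauchyPDFReal_le f _ 0 1 s
  · have : Tendsto (fun γ : ℝ≥0 => u + γ * s) (𝓝[>] 0) (𝓝 u) := by
      simpa using ((by fun_prop : Continuous fun γ : ℝ≥0 => u + γ * s).tendsto 0).mono_left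
        nhdsWithin_le_nhds
    exact ((f.continuous.tendsto u).comp this).mul_const _

variable (μ : Measure ℝ) [IsFiniteMeasure μ]

lemma integral_integral_mul_cauchyPDFReal_swap (f : ℝ →ᵇ ℝ) {γ : ℝ≥0} (hγ : γ ≠ 0) :
    ∫ u, (∫ a, f a * cauchyPDFReal u γ a) ∂μ = ∫ a, f a * ∫ u, cauchyPDFReal u γ a ∂μ := by
  have hmeas :=
    (continuous_mul_cauchyPDFReal_uncurry f hγ).aestronglyMeasurable (μ := μ.prod volume)
  have hint : Integrable (Function.uncurry fun u a => f a * cauchyPDFReal u γ a)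
      (μ.prod volume) := by
    refine (integrable_prod_iff hmeas).2
      ⟨ae_of_all _ fun u => integrable_mul_cauchyPDFReal f u γ, ?_⟩
    refine (integrable_const ‖f‖).mono' hmeas.norm.integral_prod_right' (ae_of_all _ fun u => ?_)
    rw [Real.norm_of_nonneg (integral_nonneg fun _ => norm_nonneg _)]
    exact integral_norm_mul_cauchyPDFReal_le f u hγ
  simp_rw [integral_integral_swap hint, integral_const_mul]

lemma tendsto_integral_integral_mul_cauchyPDFReal (f : ℝ →ᵇ ℝ) :
    Tendsto (fun γ : ℝ≥0 => ∫ u, (∫ a, f a * cauchyPDFReal u γ a) ∂μ) (𝓝[>] 0)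
      (𝓝 (∫ u, f u ∂μ)) := by
  refine tendsto_integral_filter_of_dominated_convergence (fun _ => ‖f‖) ?_ ?_
    (integrable_const (μ := μ) _) (ae_of_all _ (tendsto_integral_mul_cauchyPDFReal f))
  all_goals filter_upwards [self_mem_nhdsWithin] with γ hγ
  · exact (continuous_mul_cauchyPDFReal_uncurry f hγ.ne').aestronglyMeasurable
      (μ := μ.prod volume) |>.integral_prod_right'
  · exact ae_of_all _ fun u => (norm_integral_le_integral_norm _).trans
      (integral_norm_mul_cauchyPDFReal_le f u hγ.ne')

lemma integral_cauchyPDFReal_eq_im_integral_inv_sub (a : ℝ) {γ : ℝ≥0} (hγ : γ ≠ 0) :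
    ∫ u, cauchyPDFReal u γ a ∂μ = -π⁻¹ * (∫ u, (a + γ * I - u : ℂ)⁻¹ ∂μ).im := by
  have hz : 0 < (a + γ * I : ℂ).im := by simpa using pos_iff_ne_zero.mpr hγ
  simp_rw [cauchyPDFReal_eq_im_inv_sub]
  rw [integral_const_mul]
  congr 1
  exact integral_im (integrable_inv_sub_ofReal μ hz)

theorem MeasureTheory.Measure.ext_of_integral_inv_sub_ofReal_eq {ν : Measure ℝ}
    [IsFiniteMeasure ν]
    (h : ∀ z : ℂ, 0 < z.im → ∫ u, (z - u)⁻¹ ∂μ = ∫ u, (z - u)⁻¹ ∂ν) : μ = ν := by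
  have hpoisson (a : ℝ) {γ : ℝ≥0} (hγ : γ ≠ 0) :
      ∫ u, cauchyPDFReal u γ a ∂μ = ∫ u, cauchyPDFReal u γ a ∂ν := by
    rw [integral_cauchyPDFReal_eq_im_integral_inv_sub μ a hγ,
      integral_cauchyPDFReal_eq_im_integral_inv_sub ν a hγ, h]
    simpa using pos_iff_ne_zero.mpr hγ
  refine ext_of_forall_integral_eq_of_IsFiniteMeasure fun f =>
    tendsto_nhds_unique (tendsto_integral_integral_mul_cauchyPDFReal μ f)
      ((tendsto_integral_integral_mul_cauchyPDFReal ν f).congr' ?_)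
  filter_upwards [self_mem_nhdsWithin] with γ hγ
  simp_rw [integral_integral_mul_cauchyPDFReal_swap _ f hγ.ne', hpoisson _ hγ.ne']

end CauchyKernel

theorem MeasureTheory.Measure.integral_bind {α β E : Type*} [MeasurableSpace α]
    [MeasurableSpace β] [NormedAddCommGroup E] [NormedSpace ℝ E] {μ : Measure α} [SFinite μ]
    {κ : Kernel α β} [IsSFiniteKernel κ] {f : β → E} (hf : Integrable f (κ ∘ₘ μ)) :
    ∫ y, f y ∂(κ ∘ₘ μ) = ∫ x, ∫ y, f y ∂κ x ∂μ := by
  have hprod := (Measure.integrable_compProd_snd_iff hf.1).2 hf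
  rw [← Measure.snd_compProd] at hf ⊢
  rw [Measure.snd, integral_map measurable_snd.aemeasurable hf.1, Measure.integral_compProd hprod]

theorem stmt19_general (k : ℝ → ℝ → ℝ → Measure ℝ) (H : ℝ → ℝ → ℂ → ℂ)
    (hprob : ∀ s t : ℝ, 0 ≤ s → s ≤ t → ∀ x : ℝ, IsProbabilityMeasure (k s t x))
    (hmeas : ∀ s t : ℝ, Measurable (k s t))
    (hmap : ∀ s t : ℝ, 0 ≤ s → s ≤ t → ∀ z : ℂ, 0 < z.im → 0 < (H s t z).im)
    (hcomp : ∀ s r t : ℝ, 0 ≤ s → s ≤ r → r ≤ t → ∀ z : ℂ, 0 < z.im →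
      H s t z = H s r (H r t z))
    (hcauchy : ∀ s t : ℝ, 0 ≤ s → s ≤ t → ∀ x : ℝ, ∀ z : ℂ, 0 < z.im →
      ∫ u, (z - (u : ℂ))⁻¹ ∂(k s t x) = (H s t z - (x : ℂ))⁻¹) :
    ∀ s r t : ℝ, 0 ≤ s → s ≤ r → r ≤ t → ∀ x : ℝ,
      k s t x = (k s r x).bind (k r t) := by
  intro s r t hs hsr hrt x
  have hr : 0 ≤ r := hs.trans hsr
  have hst : s ≤ t := hsr.trans hrt
  let κ : Kernel ℝ ℝ := ⟨k r t, hmeas r t⟩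
  have : IsMarkovKernel κ := ⟨hprob r t hr hrt⟩
  have : IsProbabilityMeasure (k s t x) := hprob s t hs hst x
  have : IsProbabilityMeasure (k s r x) := hprob s r hs hsr x
  change k s t x = κ ∘ₘ k s r x
  refine Measure.ext_of_integral_inv_sub_ofReal_eq _ fun z hz => ?_
  rw [Measure.integral_bind (integrable_inv_sub_ofReal _ hz),
    hcauchy s t hs hst x z hz, hcomp s r t hs hsr hrt z hz,
    ← hcauchy s r hs hsr x _ (hmap r t hr hrt z hz)]
  exact integral_congr_ae (ae_of_all _ fun u => (hcauchy r t hr hrt u z hz).symm)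

/-- If the kernels `k_{s,t}(x; du)` are the representing measures of the resolvents
`1/(H_{s,t}(z) - x)` of a composing family of self-maps `H_{s,t}` of the upper half
plane, then they satisfy the Chapman–Kolmogorov equation. -/
theorem stmt19 (k : ℝ → ℝ → ℝ → Measure ℝ) (H : ℝ → ℝ → ℂ → ℂ)
    (hprob : ∀ s t : ℝ, 0 ≤ s → s ≤ t → ∀ x : ℝ, IsProbabilityMeasure (k s t x))
    (hsupp : ∀ s t : ℝ, 0 ≤ s → s ≤ t → ∀ x : ℝ, ∃ M : ℝ, k s t x (Set.Icc (-M) M)ᶜ = 0)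
    (hmeas : ∀ s t : ℝ, Measurable (k s t))
    (hmap : ∀ s t : ℝ, 0 ≤ s → s ≤ t → ∀ z : ℂ, 0 < z.im → 0 < (H s t z).im)
    (hcomp : ∀ s r t : ℝ, 0 ≤ s → s ≤ r → r ≤ t → ∀ z : ℂ, 0 < z.im →
      H s t z = H s r (H r t z))
    (hcauchy : ∀ s t : ℝ, 0 ≤ s → s ≤ t → ∀ x : ℝ, ∀ z : ℂ, 0 < z.im →
      ∫ u, (z - (u : ℂ))⁻¹ ∂(k s t x) = (H s t z - (x : ℂ))⁻¹) :
    ∀ s r t : ℝ, 0 ≤ s → s ≤ r → r ≤ t → ∀ x : ℝ,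
      k s t x = (k s r x).bind (k r t) :=
  stmt19_general k H hprob hmeas hmap hcomp hcauchy
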